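/- arXiv:1701.00445 — 5 statements merged into one kernel-verified Lean document; each statement's English description precedes it below -/
import Mathlib

section
/- Let T, t_A, t_B be positive integers with t_B ≤ t_A ≤ T. For each positive integer k, let c(k) denote the number of pairs (x, y) with x, y ∈ {1, …, T·k} such that y ≤ x + t_A·k − 1 and x ≤ y + t_B·k − 1. Then the sequence c(k)/(T·k)² converges, as k → ∞, to (t_A + t_B)/T − (t_A² + t_B²)/(2T²). -/
/-!
A pair of start positions `(x, y)` in `{1, …, N}` either overlaps, or has `x + a ≤ y`, or has
`y + b ≤ x`, and (for `a + b > 0`) exactly one of the three holds. The two non-overlapping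
regions are discrete triangles with `(N - a)(N - a + 1)/2` and `(N - b)(N - b + 1)/2` points, so
with `N = T k`, `a = t_A k`, `b = t_B k` the overlap fraction is exactly an affine function of
`1/k`, whose constant term is the limit.
-/

open Finset Filter

theorem sum_Icc_tsub_mul_two (n a : ℕ) :
    (∑ y ∈ Icc 1 n, (y - a)) * 2 = (n - a) * (n - a + 1) := by
  induction n with
  | zero => simp
  | succ n ih =>
    rw [sum_Icc_succ_top (by omega), add_mul, ih]
    rcases le_or_gt a n with han | han
    · obtain ⟨m, rfl⟩ := Nat.exists_eq_add_of_le han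
      rw [show a + m + 1 - a = m + 1 by omega, Nat.add_sub_cancel_left]
      ring
    · rw [Nat.sub_eq_zero_of_le han.le, Nat.sub_eq_zero_of_le han]

theorem card_filter_add_le_mul_two (N a : ℕ) :
    #{p ∈ Icc 1 N ×ˢ Icc 1 N | p.1 + a ≤ p.2} * 2 = (N - a) * (N - a + 1) := by
  have fibre : ∀ y ∈ Icc 1 N, #{x ∈ Icc 1 N | x + a ≤ y} = y - a := fun y hy => by
    rw [show {x ∈ Icc 1 N | x + a ≤ y} = Icc 1 (y - a) by
      ext x; simp only [mem_filter, mem_Icc] at hy ⊢; omega, Nat.card_Icc, Nat.add_sub_cancel]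
  rw [card_filter, sum_product_right]
  simp only [← card_filter]
  rw [sum_congr rfl fibre, sum_Icc_tsub_mul_two]

theorem card_filter_product_self_swap {α : Type*} (s : Finset α) (r : α → α → Prop)
    [DecidableRel r] : #{p ∈ s ×ˢ s | r p.2 p.1} = #{p ∈ s ×ˢ s | r p.1 p.2} :=
  card_nbij' Prod.swap Prod.swap (fun p hp => by simp_all) (fun p hp => by simp_all)
    (fun p _ => rfl) (fun p _ => rfl)

/-- Start positions `(x, y)` for which `[x, x + a)` and `[y, y + b)` intersect. -/
def overlapPairs (N a b : ℕ) : Finset (ℕ × ℕ) :=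
  {p ∈ Icc 1 N ×ˢ Icc 1 N | p.2 < p.1 + a ∧ p.1 < p.2 + b}

theorem card_overlapPairs_mul_two (N a b : ℕ) (hab : 0 < a + b) :
    #(overlapPairs N a b) * 2 + (N - a) * (N - a + 1) + (N - b) * (N - b + 1) = 2 * N ^ 2 := by
  have trichotomy : ∀ p ∈ Icc 1 N ×ˢ Icc 1 N,
      ((if p.2 < p.1 + a ∧ p.1 < p.2 + b then 1 else 0) + (if p.1 + a ≤ p.2 then 1 else 0)
        + if p.2 + b ≤ p.1 then 1 else 0) = 1 := fun p _ => by
    split_ifs <;> omega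
  have hcard : #(Icc 1 N ×ˢ Icc 1 N) = N ^ 2 := by
    rw [card_product, Nat.card_Icc, Nat.add_sub_cancel, sq]
  rw [← card_filter_add_le_mul_two, ← card_filter_add_le_mul_two,
    ← card_filter_product_self_swap _ (fun x y => x + b ≤ y), overlapPairs, ← hcard,
    card_filter, card_filter, card_filter, card_eq_sum_ones, ← sum_congr rfl trichotomy,
    sum_add_distrib, sum_add_distrib]
  ring

/-- The truncated subtractions are harmless because `x, y ≥ 1`. -/
theorem filter_tsub_one_eq_overlapPairs (N a b : ℕ) :
    {p ∈ Icc 1 N ×ˢ Icc 1 N | p.2 ≤ p.1 + a - 1 ∧ p.1 ≤ p.2 + b - 1} = overlapPairs N a b :=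
  filter_congr fun p hp => by simp only [mem_product, mem_Icc] at hp; omega

theorem overlapPairs_scaled_div_sq (T tA tB k : ℕ) (hAB : 0 < tA + tB) (hA : tA ≤ T)
    (hB : tB ≤ T) (hk : k ≠ 0) :
    (#(overlapPairs (T * k) (tA * k) (tB * k)) : ℝ) / (T * k : ℝ) ^ 2 =
      (tA + tB : ℝ) / T - ((tA : ℝ) ^ 2 + (tB : ℝ) ^ 2) / (2 * (T : ℝ) ^ 2)
        - (2 * T - tA - tB : ℝ) / (2 * (T : ℝ) ^ 2) * (k : ℝ)⁻¹ := by
  have hT : (T : ℝ) ≠ 0 := by norm_cast; omega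
  have hcount := card_overlapPairs_mul_two (T * k) (tA * k) (tB * k)
    (by rw [← add_mul]; positivity)
  rw [← Nat.sub_mul, ← Nat.sub_mul] at hcount
  have hcountℝ := congrArg (Nat.cast : ℕ → ℝ) hcount
  push_cast [Nat.cast_sub hA, Nat.cast_sub hB] at hcountℝ
  field_simp
  linear_combination hcountℝ

theorem overlap_prob_limit_single (T tA tB : ℕ)
    (htB : 0 < tB) (htBA : tB ≤ tA) (htAT : tA ≤ T) :
    Tendsto
      (fun k : ℕ =>
        ((((Finset.Icc 1 (T * k) ×ˢ Finset.Icc 1 (T * k)).filter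
            (fun p : ℕ × ℕ => p.2 ≤ p.1 + tA * k - 1 ∧ p.1 ≤ p.2 + tB * k - 1)).card : ℝ)
          / (T * k : ℝ) ^ 2))
      atTop
      (nhds ((tA + tB : ℝ) / T - ((tA : ℝ) ^ 2 + (tB : ℝ) ^ 2) / (2 * (T : ℝ) ^ 2))) := by
  simp_rw [filter_tsub_one_eq_overlapPairs]
  have hlim := ((tendsto_inv_atTop_zero.comp tendsto_natCast_atTop_atTop).const_mul
    ((2 * T - tA - tB : ℝ) / (2 * (T : ℝ) ^ 2))).const_sub
    ((tA + tB : ℝ) / T - ((tA : ℝ) ^ 2 + (tB : ℝ) ^ 2) / (2 * (T : ℝ) ^ 2))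
  rw [mul_zero, sub_zero] at hlim
  refine hlim.congr' ?_
  filter_upwards [eventually_ne_atTop 0] with k hk
  exact (overlapPairs_scaled_div_sq T tA tB k (by omega) htAT (htBA.trans htAT) hk).symm
end

section
/- Let a, b be fixed natural numbers, let m, m_a, m_b be positive real numbers, and let M, M_A, M_B : ℕ → ℕ be sequences such that M(k)/k → m, M_A(k)/k → m_a and M_B(k)/k → m_b as k → ∞. Then the sequence k ↦ [(M(k) + a + b)! · M_A(k)! · M_B(k)!] / [(M_A(k) + a)! · (M_B(k) + b)! · M(k)!] converges to m^{a+b} / (m_a^a · m_b^b). -/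
/-!
Each quotient `(N + c)! / N!` is the product of the `c` factors `N + i + 1`. When `N / k → n`,
each factor divided by `k` tends to `n`, so `(N + c)! / N! / k ^ c → n ^ c`; in the ratio of the
theorem the powers `k ^ (a + b)` and `k ^ a * k ^ b` cancel.
-/

open Filter Finset Topology
open scoped Nat

lemma Nat.cast_add_factorial_div_factorial {K : Type*} [Field K] [CharZero K] (n c : ℕ) :
    ((n + c)! : K) / n ! = ∏ i ∈ range c, ((n : K) + i + 1) := by
  rw [← Nat.factorial_mul_ascFactorial, Nat.ascFactorial_eq_prod_range, Nat.cast_mul,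
    mul_div_cancel_left₀ _ (Nat.cast_ne_zero.mpr n.factorial_ne_zero)]
  push_cast
  simp only [add_right_comm]

lemma tendsto_add_const_div_of_tendsto_div {N : ℕ → ℕ} {n : ℝ}
    (hN : Tendsto (fun k : ℕ => (N k : ℝ) / k) atTop (𝓝 n)) (x : ℝ) :
    Tendsto (fun k : ℕ => ((N k : ℝ) + x) / k) atTop (𝓝 n) := by
  simpa only [add_div, add_zero] using hN.add (tendsto_const_div_atTop_nhds_zero_nat x)

lemma tendsto_add_factorial_div_factorial_div_pow {N : ℕ → ℕ} {n : ℝ}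
    (hN : Tendsto (fun k : ℕ => (N k : ℝ) / k) atTop (𝓝 n)) (c : ℕ) :
    Tendsto (fun k : ℕ => ((N k + c)! : ℝ) / (N k)! / (k : ℝ) ^ c) atTop (𝓝 (n ^ c)) := by
  have hprod : Tendsto (fun k : ℕ => ∏ i ∈ range c, (((N k : ℝ) + (i + 1)) / k)) atTop
      (𝓝 (∏ _i ∈ range c, n)) :=
    tendsto_finsetProd _ fun i _ => tendsto_add_const_div_of_tendsto_div hN _
  rw [prod_const, card_range] at hprod
  refine hprod.congr fun k => ?_
  rw [Nat.cast_add_factorial_div_factorial, prod_div_distrib, prod_const, card_range]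
  simp only [add_assoc]

theorem factorial_ratio_limit_general (a b : ℕ) (m mA mB : ℝ)
    (hmA : 0 < mA) (hmB : 0 < mB)
    (M MA MB : ℕ → ℕ)
    (hM : Tendsto (fun k : ℕ => (M k : ℝ) / k) atTop (nhds m))
    (hMA : Tendsto (fun k : ℕ => (MA k : ℝ) / k) atTop (nhds mA))
    (hMB : Tendsto (fun k : ℕ => (MB k : ℝ) / k) atTop (nhds mB)) :
    Tendsto
      (fun k : ℕ =>
        ((M k + a + b).factorial * (MA k).factorial * (MB k).factorial : ℝ) /
          ((MA k + a).factorial * (MB k + b).factorial * (M k).factorial : ℝ))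
      atTop (nhds (m ^ (a + b) / (mA ^ a * mB ^ b))) := by
  have hlim := (tendsto_add_factorial_div_factorial_div_pow hM (a + b)).div
    ((tendsto_add_factorial_div_factorial_div_pow hMA a).mul
      (tendsto_add_factorial_div_factorial_div_pow hMB b)) (by positivity)
  refine hlim.congr' ?_
  filter_upwards [eventually_ne_atTop 0] with k hk
  have hk₀ : (k : ℝ) ≠ 0 := Nat.cast_ne_zero.mpr hk
  rw [Pi.div_apply, add_assoc, pow_add]
  field_simp

theorem factorial_ratio_limit (a b : ℕ) (m mA mB : ℝ)
    (hm : 0 < m) (hmA : 0 < mA) (hmB : 0 < mB)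
    (M MA MB : ℕ → ℕ)
    (hM : Tendsto (fun k : ℕ => (M k : ℝ) / k) atTop (nhds m))
    (hMA : Tendsto (fun k : ℕ => (MA k : ℝ) / k) atTop (nhds mA))
    (hMB : Tendsto (fun k : ℕ => (MB k : ℝ) / k) atTop (nhds mB)) :
    Tendsto
      (fun k : ℕ =>
        ((M k + a + b).factorial * (MA k).factorial * (MB k).factorial : ℝ) /
          ((MA k + a).factorial * (MB k + b).factorial * (M k).factorial : ℝ))
      atTop (nhds (m ^ (a + b) / (mA ^ a * mB ^ b))) :=
  factorial_ratio_limit_general a b m mA mB hmA hmB M MA MB hM hMA hMB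
end

section
/- Let T, t_A, t_B be positive integers and n_A, n_B natural numbers with t_A·n_A + t_B·n_B < T. Then the limit as k → ∞ of [C(n_A + n_B, n_A) · C(T·k − (t_A·k − 1)·n_A − (t_B·k − 1)·n_B, n_A + n_B)] / [C(T·k − (t_A·k − 1)·n_A, n_A) · C(T·k − (t_B·k − 1)·n_B, n_B)] equals (T − t_A·n_A − t_B·n_B)^{n_A + n_B} / [(T − t_A·n_A)^{n_A} · (T − t_B·n_B)^{n_B}]. -/
/-!
For `k ≥ 1` the upper arguments of the binomial coefficients are affine in `k`:
`(T - tA nA - tB nB) k + (nA + nB)`, `(T - tA nA) k + nA` and `(T - tB nB) k + nB`.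
Since `C(a k + p, n) ~ (a k)^n / n!` as `k → ∞`, the powers of `k` cancel in the quotient,
and `C(nA + nB, nA)` cancels the factorials.
-/

open Filter Topology Asymptotics

theorem tendsto_choose_mul_add_div_pow {a : ℕ} (ha : 0 < a) (b n : ℕ) :
    Tendsto (fun k : ℕ => ((a * k + b).choose n : ℝ) / (k : ℝ) ^ n) atTop
      (𝓝 ((a : ℝ) ^ n / n.factorial)) := by
  have harg : Tendsto (fun k : ℕ => a * k + b) atTop atTop :=
    tendsto_atTop_mono (fun k => Nat.le_add_right _ _) (tendsto_id.const_mul_atTop' ha)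
  have hequiv := ((isEquivalent_choose n).comp_tendsto harg).div
    (IsEquivalent.refl (u := fun k : ℕ => (k : ℝ) ^ n))
  refine hequiv.symm.tendsto_nhds ?_
  have hbase : Tendsto (fun k : ℕ => (a : ℝ) + b / k) atTop (𝓝 a) := by
    simpa using tendsto_const_nhds.add (tendsto_const_div_atTop_nhds_zero_nat (b : ℝ))
  refine ((hbase.pow n).div_const _).congr' ?_
  filter_upwards [eventually_ne_atTop 0] with k hk
  have hk' : (k : ℝ) ≠ 0 := Nat.cast_ne_zero.2 hk
  simp only [Function.comp_apply, Pi.div_apply]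
  rw [div_right_comm, ← div_pow]
  congr 2
  push_cast
  field_simp

theorem tendsto_choose_mul_choose_div_choose_mul_choose {a b c : ℕ} (ha : 0 < a) (hb : 0 < b)
    (hc : 0 < c) (m n p q r : ℕ) :
    Tendsto (fun k : ℕ => ((m + n).choose m * (a * k + p).choose (m + n) : ℝ) /
        ((b * k + q).choose m * (c * k + r).choose n))
      atTop (𝓝 ((a : ℝ) ^ (m + n) / ((b : ℝ) ^ m * (c : ℝ) ^ n))) := by
  have hlim := ((tendsto_choose_mul_add_div_pow ha p (m + n)).const_mul ((m + n).choose m : ℝ)).div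
    ((tendsto_choose_mul_add_div_pow hb q m).mul (tendsto_choose_mul_add_div_pow hc r n))
    (by positivity)
  have hval : ((m + n).choose m : ℝ) * ((a : ℝ) ^ (m + n) / (m + n).factorial) /
      ((b : ℝ) ^ m / m.factorial * ((c : ℝ) ^ n / n.factorial)) =
      (a : ℝ) ^ (m + n) / ((b : ℝ) ^ m * (c : ℝ) ^ n) := by
    rw [Nat.cast_add_choose]
    field_simp
  rw [← hval]
  refine hlim.congr' ?_
  filter_upwards [eventually_ne_atTop 0] with k hk
  have hk' : (k : ℝ) ≠ 0 := Nat.cast_ne_zero.2 hk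
  simp only [Pi.div_apply]
  rw [pow_add]
  field_simp

theorem add_tsub_pred_mul {s : ℕ} (hs : 0 < s) (n m : ℕ) : s * n + m - (s - 1) * n = m + n := by
  have : n ≤ s * n := Nat.le_mul_of_pos_left n hs
  rw [Nat.sub_one_mul]
  omega

theorem no_overlap_prob_limit_general (T tA tB : ℕ) (htA : 0 < tA) (htB : 0 < tB)
    (nA nB : ℕ) (h : tA * nA + tB * nB < T) :
    Tendsto
      (fun k : ℕ =>
        ((Nat.choose (nA + nB) nA *
            Nat.choose (T * k - (tA * k - 1) * nA - (tB * k - 1) * nB) (nA + nB) : ℝ)) /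
          ((Nat.choose (T * k - (tA * k - 1) * nA) nA *
            Nat.choose (T * k - (tB * k - 1) * nB) nB : ℝ)))
      atTop
      (nhds (((T : ℝ) - tA * nA - tB * nB) ^ (nA + nB) /
        (((T : ℝ) - tA * nA) ^ nA * ((T : ℝ) - tB * nB) ^ nB))) := by
  obtain ⟨a, rfl⟩ := Nat.exists_eq_add_of_lt h
  have hlim := tendsto_choose_mul_choose_div_choose_mul_choose (a := a + 1)
    (b := tB * nB + a + 1) (c := tA * nA + a + 1) a.succ_pos (by omega) (by omega)
    nA nB (nA + nB) nA nB
  convert hlim.congr' _ using 2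
  · push_cast
    ring
  filter_upwards [eventually_gt_atTop 0] with k hk
  have hA : (tA * nA + tB * nB + a + 1) * k - (tA * k - 1) * nA = (tB * nB + a + 1) * k + nA := by
    rw [show (tA * nA + tB * nB + a + 1) * k = tA * k * nA + (tB * nB + a + 1) * k by ring,
      add_tsub_pred_mul (Nat.mul_pos htA hk)]
  have hB : (tA * nA + tB * nB + a + 1) * k - (tB * k - 1) * nB = (tA * nA + a + 1) * k + nB := by
    rw [show (tA * nA + tB * nB + a + 1) * k = tB * k * nB + (tA * nA + a + 1) * k by ring,
      add_tsub_pred_mul (Nat.mul_pos htB hk)]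
  have hAB : (tB * nB + a + 1) * k + nA - (tB * k - 1) * nB = (a + 1) * k + (nA + nB) := by
    rw [show (tB * nB + a + 1) * k + nA = tB * k * nB + ((a + 1) * k + nA) by ring,
      add_tsub_pred_mul (Nat.mul_pos htB hk)]
    ring
  rw [hA, hB, hAB]

theorem no_overlap_prob_limit (T tA tB : ℕ) (hT : 0 < T) (htA : 0 < tA) (htB : 0 < tB)
    (nA nB : ℕ) (h : tA * nA + tB * nB < T) :
    Tendsto
      (fun k : ℕ =>
        ((Nat.choose (nA + nB) nA *
            Nat.choose (T * k - (tA * k - 1) * nA - (tB * k - 1) * nB) (nA + nB) : ℝ)) /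
          ((Nat.choose (T * k - (tA * k - 1) * nA) nA *
            Nat.choose (T * k - (tB * k - 1) * nB) nB : ℝ)))
      atTop
      (nhds (((T : ℝ) - tA * nA - tB * nB) ^ (nA + nB) /
        (((T : ℝ) - tA * nA) ^ nA * ((T : ℝ) - tB * nB) ^ nB))) :=
  no_overlap_prob_limit_general T tA tB htA htB nA nB h
end

section
/- Let t_A, t_B be positive real numbers, n_A, n_B natural numbers, and define u := t_A·n_A, v := t_B·n_B and Q(s) := (s − u − v)^{n_A + n_B} / ((s − u)^{n_A} · (s − v)^{n_B}) for real s. Then Q is nondecreasing on the interval (u + v, ∞): for all real s₁, s₂ with u + v < s₁ ≤ s₂ one has Q(s₁) ≤ Q(s₂). -/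
/-!
Writing `u = t_A n_A` and `v = t_B n_B`, the ratio factors as
`Q(s) = (1 - v / (s - u)) ^ n_A * (1 - u / (s - v)) ^ n_B`,
a product of powers of nonnegative factors, each nondecreasing in `s` because `u, v ≥ 0`.
-/

section

variable {K : Type*} [Field K]

theorem pow_add_div_pow_mul_pow (a b c : K) (m n : ℕ) :
    a ^ (m + n) / (b ^ m * c ^ n) = (a / b) ^ m * (a / c) ^ n := by
  rw [pow_add, div_pow, div_pow]
  ring

variable [LinearOrder K] [IsStrictOrderedRing K]

theorem sub_sub_div_sub_le_of_le {u v s s' : K} (hv : 0 ≤ v) (hs : u < s) (hss' : s ≤ s') :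
    (s - u - v) / (s - u) ≤ (s' - u - v) / (s' - u) := by
  have hs' : u < s' := hs.trans_le hss'
  rw [sub_div (s - u), sub_div (s' - u), div_self (sub_ne_zero.2 hs.ne'),
    div_self (sub_ne_zero.2 hs'.ne')]
  gcongr

theorem sub_sub_div_sub_right_le_of_le {u v s s' : K} (hu : 0 ≤ u) (hs : v < s) (hss' : s ≤ s') :
    (s - u - v) / (s - v) ≤ (s' - u - v) / (s' - v) := by
  simpa only [sub_right_comm _ v u] using sub_sub_div_sub_le_of_le hu hs hss'

end

theorem no_overlap_prob_mono (tA tB : ℝ) (htA : 0 < tA) (htB : 0 < tB) (nA nB : ℕ)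
    (s₁ s₂ : ℝ) (h₁ : tA * nA + tB * nB < s₁) (h₁₂ : s₁ ≤ s₂) :
    (s₁ - tA * nA - tB * nB) ^ (nA + nB) /
        ((s₁ - tA * nA) ^ nA * (s₁ - tB * nB) ^ nB)
      ≤ (s₂ - tA * nA - tB * nB) ^ (nA + nB) /
        ((s₂ - tA * nA) ^ nA * (s₂ - tB * nB) ^ nB) := by
  have hu : 0 ≤ tA * nA := by positivity
  have hv : 0 ≤ tB * nB := by positivity
  rw [pow_add_div_pow_mul_pow, pow_add_div_pow_mul_pow]
  have hA₀ : 0 ≤ (s₁ - tA * nA - tB * nB) / (s₁ - tA * nA) := div_nonneg (by linarith) (by linarith)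
  have hB₀ : 0 ≤ (s₁ - tA * nA - tB * nB) / (s₁ - tB * nB) := div_nonneg (by linarith) (by linarith)
  have hA := sub_sub_div_sub_le_of_le hv (by linarith : tA * nA < s₁) h₁₂
  have hB := sub_sub_div_sub_right_le_of_le hu (by linarith : tB * nB < s₁) h₁₂
  exact mul_le_mul (pow_le_pow_left₀ hA₀ hA nA) (pow_le_pow_left₀ hB₀ hB nB) (by positivity)
    (pow_nonneg (hA₀.trans hA) nA)
end

section
/- Let T, t_A, t_B be positive real numbers with t_B ≤ t_A, let n_A, n_B be natural numbers, and set u := t_A·n_A, v := t_B·n_B, Q(s) := (s − u − v)^{n_A + n_B} / ((s − u)^{n_A} · (s − v)^{n_B}), α_A := T + t_A − u − v, α_B := α_A − (t_A − t_B)/2 and τ := max(u, v). If α_B > 0, then Q(T + t_A) − Q(T + (t_A + t_B)/2) ≤ Q(T + (t_A + t_B)/2) · ( (α_A·(α_B + τ) / (α_B·(α_A + τ)))^{n_A + n_B} − 1 ). In particular, the error E := Q(T + t_A) − Q(T + (t_A + t_B)/2) incurred by extending the total time by the midpoint value δ* = (t_A + t_B)/2 instead of t_A is bounded above by Q(T +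 δ*) · ((α_A(α_B + τ))/(α_B(α_A + τ)))^{n_A + n_B} − Q(T + δ*). -/
/-!
Write `Q` in the variable `α = s - u - v`, so that `Q = α ^ (nA + nB) / ((α + v) ^ nA * (α + u) ^ nB)`.
Comparing `α = a` with `α = b ≤ a`, the ratio `Q(a) / Q(b)` is `(a / b) ^ (nA + nB)` times factors
`(b + x) / (a + x)` with `x ∈ {u, v}`. Since `x ↦ (b + x) / (a + x)` is increasing, each factor is at
most `(b + τ) / (a + τ)`, which gives `Q(a) ≤ Q(b) * (a (b + τ) / (b (a + τ))) ^ (nA + nB)`.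
-/

/-- The no-overlap probability `Q(s)` as a function of `α = s - u - v`. -/
noncomputable def noOverlap (u v : ℝ) (nA nB : ℕ) (α : ℝ) : ℝ :=
  α ^ (nA + nB) / ((α + v) ^ nA * (α + u) ^ nB)

lemma add_div_add_le_add_div_add {a b x y : ℝ} (hb : 0 < b) (hba : b ≤ a) (hx : 0 ≤ x)
    (hxy : x ≤ y) : (b + x) / (a + x) ≤ (b + y) / (a + y) := by
  rw [div_le_div_iff₀ (by linarith) (by linarith)]
  nlinarith [mul_nonneg (sub_nonneg.2 hba) (sub_nonneg.2 hxy)]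

section

variable {u v : ℝ} {nA nB : ℕ} {a b : ℝ}

lemma noOverlap_eq_mul (hu : 0 ≤ u) (hv : 0 ≤ v) (hb : 0 < b) (ha : 0 < a) :
    noOverlap u v nA nB a = noOverlap u v nA nB b *
      ((a / b) ^ (nA + nB) * (((b + v) / (a + v)) ^ nA * ((b + u) / (a + u)) ^ nB)) := by
  have hav : a + v ≠ 0 := by positivity
  have hau : a + u ≠ 0 := by positivity
  have hbv : b + v ≠ 0 := by positivity
  have hbu : b + u ≠ 0 := by positivity
  simp only [noOverlap, div_pow]
  field_simp

lemma noOverlap_le_mul {τ : ℝ} (hu : 0 ≤ u) (hv : 0 ≤ v) (huτ : u ≤ τ) (hvτ : v ≤ τ)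
    (hb : 0 < b) (hba : b ≤ a) :
    noOverlap u v nA nB a ≤
      noOverlap u v nA nB b * (a * (b + τ) / (b * (a + τ))) ^ (nA + nB) := by
  have ha : 0 < a := hb.trans_le hba
  have hτ : 0 ≤ τ := hu.trans huτ
  have hQb : 0 ≤ noOverlap u v nA nB b := by unfold noOverlap; positivity
  have hv_le := add_div_add_le_add_div_add hb hba hv hvτ
  have hu_le := add_div_add_le_add_div_add hb hba hu huτ
  calc noOverlap u v nA nB a
      = noOverlap u v nA nB b *
          ((a / b) ^ (nA + nB) * (((b + v) / (a + v)) ^ nA * ((b + u) / (a + u)) ^ nB)) :=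
        noOverlap_eq_mul hu hv hb ha
    _ ≤ noOverlap u v nA nB b *
          ((a / b) ^ (nA + nB) * (((b + τ) / (a + τ)) ^ nA * ((b + τ) / (a + τ)) ^ nB)) := by
        gcongr
    _ = noOverlap u v nA nB b * (a * (b + τ) / (b * (a + τ))) ^ (nA + nB) := by
        rw [← pow_add, ← mul_pow, mul_div_mul_comm]

lemma noOverlap_sub_le {τ : ℝ} (hu : 0 ≤ u) (hv : 0 ≤ v) (huτ : u ≤ τ) (hvτ : v ≤ τ)
    (hb : 0 < b) (hba : b ≤ a) :
    noOverlap u v nA nB a - noOverlap u v nA nB b ≤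
      noOverlap u v nA nB b * ((a * (b + τ) / (b * (a + τ))) ^ (nA + nB) - 1) := by
  rw [mul_sub_one]
  linarith [noOverlap_le_mul (nA := nA) (nB := nB) hu hv huτ hvτ hb hba]

end

theorem error_bound_general (T tA tB : ℝ) (htB : 0 < tB) (htBA : tB ≤ tA)
    (nA nB : ℕ)
    (hαB : 0 < (T + tA - tA * nA - tB * nB) - (tA - tB) / 2) :
    (T + tA - tA * nA - tB * nB) ^ (nA + nB) /
        ((T + tA - tA * nA) ^ nA * (T + tA - tB * nB) ^ nB)
      - (T + (tA + tB) / 2 - tA * nA - tB * nB) ^ (nA + nB) /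
        ((T + (tA + tB) / 2 - tA * nA) ^ nA * (T + (tA + tB) / 2 - tB * nB) ^ nB)
    ≤ ((T + (tA + tB) / 2 - tA * nA - tB * nB) ^ (nA + nB) /
        ((T + (tA + tB) / 2 - tA * nA) ^ nA * (T + (tA + tB) / 2 - tB * nB) ^ nB)) *
      (((T + tA - tA * nA - tB * nB) *
            (((T + tA - tA * nA - tB * nB) - (tA - tB) / 2) + max (tA * nA) (tB * nB)) /
          ((((T + tA - tA * nA - tB * nB) - (tA - tB) / 2)) *
            ((T + tA - tA * nA - tB * nB) + max (tA * nA) (tB * nB)))) ^ (nA + nB) - 1) := by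
  have hu : 0 ≤ tA * nA := mul_nonneg (htB.le.trans htBA) (Nat.cast_nonneg _)
  have hv : 0 ≤ tB * nB := mul_nonneg htB.le (Nat.cast_nonneg _)
  have h := noOverlap_sub_le (nA := nA) (nB := nB) hu hv (le_max_left _ _) (le_max_right _ _)
    hαB (a := T + tA - tA * nA - tB * nB) (by linarith)
  unfold noOverlap at h
  convert h using 2 <;> ring

theorem error_bound (T tA tB : ℝ) (hT : 0 < T) (htB : 0 < tB) (htBA : tB ≤ tA)
    (nA nB : ℕ)
    (hαB : 0 < (T + tA - tA * nA - tB * nB) - (tA - tB) / 2) :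
    (T + tA - tA * nA - tB * nB) ^ (nA + nB) /
        ((T + tA - tA * nA) ^ nA * (T + tA - tB * nB) ^ nB)
      - (T + (tA + tB) / 2 - tA * nA - tB * nB) ^ (nA + nB) /
        ((T + (tA + tB) / 2 - tA * nA) ^ nA * (T + (tA + tB) / 2 - tB * nB) ^ nB)
    ≤ ((T + (tA + tB) / 2 - tA * nA - tB * nB) ^ (nA + nB) /
        ((T + (tA + tB) / 2 - tA * nA) ^ nA * (T + (tA + tB) / 2 - tB * nB) ^ nB)) *
      (((T + tA - tA * nA - tB * nB) *
            (((T + tA - tA * nA - tB * nB) - (tA - tB) / 2) + max (tA * nA) (tB * nB)) /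
          ((((T + tA - tA * nA - tB * nB) - (tA - tB) / 2)) *
            ((T + tA - tA * nA - tB * nB) + max (tA * nA) (tB * nB)))) ^ (nA + nB) - 1) :=
  error_bound_general T tA tB htB htBA nA nB hαB
end
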